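/- arXiv:2604.19249 — 5 statements merged into one kernel-verified Lean document; each statement's English description precedes it below -/
import Mathlib

section
/- Let α > 0 and define K_α(ξ) = Γ(α+1)Γ(1 - 2πiξ)/Γ(α + 1 - 2πiξ) for ξ ∈ ℝ. Then there exist positive constants A, B such that A(1+|ξ|)^{-α} ≤ |K_α(ξ)| ≤ B(1+|ξ|)^{-α} for all ξ ∈ ℝ. -/
/-!
Write `f(y) = log (y² + t²)`. By Euler's limit formula for `Γ`,
`2 log (|Γ(x + it)| / |Γ(x + a + it)|) = lim (∑_{j ≤ n} (f(x + j + a) - f(x + j)) - 2a log n)`.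
Since `f'` is `2/k²`-Lipschitz on `[k, ∞)` (`k > 0`) uniformly in `t`, each summand is
`a (f(x + j + 1) - f(x + j))` up to `O((x + j)⁻²)`; these telescope to `a (f(x + n + 1) - f(x))`,
and `a f(x + n + 1) - 2a log n → 0`. Hence `log |Γ(x + it) / Γ(x + a + it)| = -(a/2) log (x² + t²)`
up to a bounded error, uniformly in `t`. Take `x = 1`, `t = -2πξ` and use `1 + t² ≍ (1 + |ξ|)²`.
-/

open Real Finset Filter Topology
open scoped Nat

lemma sum_range_inv_add_one_sq_le (n : ℕ) : ∑ j ∈ range n, (((j : ℝ) + 1) ^ 2)⁻¹ ≤ 2 := by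
  have := sum_Ioo_inv_sq_le (α := ℝ) 0 (n + 1)
  rw [← Finset.Ico_add_one_left_eq_Ioo, sum_Ico_eq_sum_range] at this
  simpa [add_comm] using this

lemma abs_deriv_log_sq_add_sq_sub_le {k x t : ℝ} (hk : 0 < k) (hx : k ≤ x) :
    |2 * x / (x ^ 2 + t ^ 2) - 2 * k / (k ^ 2 + t ^ 2)| ≤ 2 * (x - k) / k ^ 2 := by
  have hx0 : 0 < x := hk.trans_le hx
  have hD : 0 < (x ^ 2 + t ^ 2) * (k ^ 2 + t ^ 2) := by positivity
  have hdiff : 2 * x / (x ^ 2 + t ^ 2) - 2 * k / (k ^ 2 + t ^ 2)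
      = 2 * (x - k) * (t ^ 2 - k * x) / ((x ^ 2 + t ^ 2) * (k ^ 2 + t ^ 2)) := by
    field_simp; ring
  rw [hdiff, abs_div, abs_of_pos hD, div_le_div_iff₀ hD (by positivity), abs_mul,
    abs_of_nonneg (by linarith : 0 ≤ 2 * (x - k))]
  have hnum : |t ^ 2 - k * x| ≤ t ^ 2 + k * x := by
    rw [abs_le]; constructor <;> nlinarith [mul_pos hk hx0, sq_nonneg t]
  have hden : (t ^ 2 + k * x) * k ^ 2 ≤ (x ^ 2 + t ^ 2) * (k ^ 2 + t ^ 2) := by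
    nlinarith [mul_le_mul_of_nonneg_left hx (by positivity : 0 ≤ k ^ 2 * x), sq_nonneg (x * t),
      sq_nonneg (t ^ 2)]
  calc 2 * (x - k) * |t ^ 2 - k * x| * k ^ 2
      ≤ 2 * (x - k) * ((t ^ 2 + k * x) * k ^ 2) := by
        rw [mul_assoc]; gcongr
    _ ≤ 2 * (x - k) * ((x ^ 2 + t ^ 2) * (k ^ 2 + t ^ 2)) := by gcongr

lemma abs_log_sq_add_sq_sub_taylor_le {k s t : ℝ} (hk : 0 < k) (hs : 0 ≤ s) :
    |log ((k + s) ^ 2 + t ^ 2) - log (k ^ 2 + t ^ 2) - s * (2 * k / (k ^ 2 + t ^ 2))|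
      ≤ 2 * s ^ 2 / k ^ 2 := by
  set c := 2 * k / (k ^ 2 + t ^ 2)
  have hderiv : ∀ x ∈ Set.Icc k (k + s), HasDerivWithinAt (fun x => log (x ^ 2 + t ^ 2) - x * c)
      (2 * x / (x ^ 2 + t ^ 2) - c) (Set.Icc k (k + s)) x := by
    intro x hx
    have hx0 : 0 < x := hk.trans_le hx.1
    have hlog : HasDerivAt (fun y => log (y ^ 2 + t ^ 2)) (2 * x / (x ^ 2 + t ^ 2)) x := by
      simpa using ((hasDerivAt_pow 2 x).add_const (t ^ 2)).log (by positivity)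
    exact (hlog.sub (hasDerivAt_mul_const c)).hasDerivWithinAt
  have hbound : ∀ x ∈ Set.Icc k (k + s), ‖2 * x / (x ^ 2 + t ^ 2) - c‖ ≤ 2 * s / k ^ 2 := by
    intro x hx
    refine (abs_deriv_log_sq_add_sq_sub_le hk hx.1).trans ?_
    gcongr; linarith [hx.2]
  have := (convex_Icc k (k + s)).norm_image_sub_le_of_norm_hasDerivWithin_le hderiv hbound
    (Set.left_mem_Icc.mpr (by linarith)) (Set.right_mem_Icc.mpr (by linarith))
  rw [Real.norm_eq_abs, Real.norm_eq_abs, add_sub_cancel_left, abs_of_nonneg hs] at this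
  calc _ = |log ((k + s) ^ 2 + t ^ 2) - (k + s) * c - (log (k ^ 2 + t ^ 2) - k * c)| := by
        congr 1; ring
    _ ≤ 2 * s / k ^ 2 * s := this
    _ = 2 * s ^ 2 / k ^ 2 := by ring

lemma abs_log_sq_add_sq_sub_secant_le {k a t : ℝ} (hk : 0 < k) (ha : 0 ≤ a) :
    |log ((k + a) ^ 2 + t ^ 2) - log (k ^ 2 + t ^ 2)
      - a * (log ((k + 1) ^ 2 + t ^ 2) - log (k ^ 2 + t ^ 2))| ≤ (2 * a ^ 2 + 2 * a) / k ^ 2 := by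
  have hTa := abs_log_sq_add_sq_sub_taylor_le (t := t) hk ha
  have hT1 := abs_log_sq_add_sq_sub_taylor_le (t := t) hk zero_le_one
  set c := 2 * k / (k ^ 2 + t ^ 2)
  calc _ = |(log ((k + a) ^ 2 + t ^ 2) - log (k ^ 2 + t ^ 2) - a * c)
        - a * (log ((k + 1) ^ 2 + t ^ 2) - log (k ^ 2 + t ^ 2) - 1 * c)| := by congr 1; ring
    _ ≤ |log ((k + a) ^ 2 + t ^ 2) - log (k ^ 2 + t ^ 2) - a * c|
        + a * |log ((k + 1) ^ 2 + t ^ 2) - log (k ^ 2 + t ^ 2) - 1 * c| := by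
        grw [abs_sub, abs_mul, abs_of_nonneg ha]
    _ ≤ 2 * a ^ 2 / k ^ 2 + a * (2 * 1 ^ 2 / k ^ 2) := by gcongr
    _ = (2 * a ^ 2 + 2 * a) / k ^ 2 := by ring

lemma abs_sum_log_sq_add_sq_sub_le {x a : ℝ} (hx : 1 ≤ x) (ha : 0 ≤ a) (t : ℝ) (n : ℕ) :
    |∑ j ∈ range n, (log ((x + j + a) ^ 2 + t ^ 2) - log ((x + j) ^ 2 + t ^ 2))
      - a * (log ((x + n) ^ 2 + t ^ 2) - log (x ^ 2 + t ^ 2))| ≤ 4 * a ^ 2 + 4 * a := by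
  set g : ℕ → ℝ := fun i => log ((x + i) ^ 2 + t ^ 2)
  have htel : a * (log ((x + n) ^ 2 + t ^ 2) - log (x ^ 2 + t ^ 2))
      = ∑ j ∈ range n, a * (g (j + 1) - g j) := by
    rw [← mul_sum, sum_range_sub g n]
    simp [g]
  rw [htel, ← sum_sub_distrib]
  calc _ ≤ ∑ j ∈ range n, (2 * a ^ 2 + 2 * a) * (((j : ℝ) + 1) ^ 2)⁻¹ := by
        refine (abs_sum_le_sum_abs _ _).trans (sum_le_sum fun j _ => ?_)
        have hj : (j : ℝ) + 1 ≤ x + j := by linarith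
        have := abs_log_sq_add_sq_sub_secant_le (k := x + j) (t := t) (by positivity) ha
        simp only [g, Nat.cast_add, Nat.cast_one, ← add_assoc]
        refine this.trans ?_
        rw [div_eq_mul_inv]
        gcongr
    _ ≤ (2 * a ^ 2 + 2 * a) * 2 := by
        rw [← mul_sum]; gcongr; exact sum_range_inv_add_one_sq_le n
    _ = 4 * a ^ 2 + 4 * a := by ring

lemma two_mul_log_norm_GammaSeq {x : ℝ} (hx : 0 < x) (t : ℝ) {n : ℕ} (hn : n ≠ 0) :
    2 * log ‖Complex.GammaSeq (x + t * Complex.I) n‖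
      = 2 * x * log n + 2 * log n ! - ∑ j ∈ range (n + 1), log ((x + j) ^ 2 + t ^ 2) := by
  have hfactor : ∀ j : ℕ, 2 * log ‖(x : ℂ) + t * Complex.I + j‖ = log ((x + j) ^ 2 + t ^ 2) := by
    intro j
    rw [show (x : ℂ) + t * Complex.I + j = ((x + j : ℝ) : ℂ) + t * Complex.I by push_cast; ring,
      Complex.norm_add_mul_I, log_sqrt (by positivity)]
    ring
  have hpos : ∀ j ∈ range (n + 1), ‖(x : ℂ) + t * Complex.I + j‖ ≠ 0 := by
    intro j _
    rw [norm_ne_zero_iff]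
    intro h
    have : x + j = 0 := by simpa using congrArg Complex.re h
    linarith [j.cast_nonneg (α := ℝ)]
  have hn0 : (0 : ℝ) < n := by positivity
  rw [Complex.GammaSeq, norm_div, norm_mul, Complex.norm_natCast_cpow_of_pos (by positivity),
    norm_prod, Complex.norm_natCast, log_div (by positivity) (prod_ne_zero_iff.mpr hpos),
    log_mul (by positivity) (by positivity), log_rpow hn0, log_prod hpos, mul_sub, mul_add,
    mul_sum]
  simp only [hfactor, Complex.add_re, Complex.ofReal_re, Complex.mul_re, Complex.I_re,
    Complex.ofReal_im, Complex.I_im]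
  ring

lemma tendsto_log_sq_add_sq_sub_two_mul_log {c : ℝ} (hc : 0 ≤ c) (t : ℝ) :
    Tendsto (fun n : ℕ => log ((c + n) ^ 2 + t ^ 2) - 2 * log n) atTop (𝓝 0) := by
  have hinner : Tendsto (fun n : ℕ => (c / n + 1) ^ 2 + (t / n) ^ 2) atTop (𝓝 1) := by
    simpa using (((tendsto_const_div_atTop_nhds_zero_nat c).add_const 1).pow 2).add
      ((tendsto_const_div_atTop_nhds_zero_nat t).pow 2)
  have hlog := hinner.log one_ne_zero
  rw [log_one] at hlog
  refine hlog.congr' ?_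
  filter_upwards [eventually_ne_atTop 0] with n hn
  have hn' : (0 : ℝ) < n := by positivity
  rw [show (c / n + 1) ^ 2 + (t / n) ^ 2 = ((c + n) ^ 2 + t ^ 2) / n ^ 2 by field_simp,
    log_div (by positivity) (by positivity), log_pow]
  push_cast
  ring

lemma tendsto_log_norm_GammaSeq {s : ℂ} (hs : 0 < s.re) :
    Tendsto (fun n => log ‖Complex.GammaSeq s n‖) atTop (𝓝 (log ‖Complex.Gamma s‖)) :=
  (Complex.GammaSeq_tendsto_Gamma s).norm.log
    (norm_ne_zero_iff.mpr (Complex.Gamma_ne_zero_of_re_pos hs))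

lemma abs_log_norm_Gamma_sub_log_norm_Gamma_add_le {x a : ℝ} (hx : 1 ≤ x) (ha : 0 ≤ a) (t : ℝ) :
    |log ‖Complex.Gamma (x + t * Complex.I)‖ - log ‖Complex.Gamma (x + a + t * Complex.I)‖
      + a / 2 * log (x ^ 2 + t ^ 2)| ≤ 2 * a ^ 2 + 2 * a := by
  have hxa : (x : ℂ) + a + t * Complex.I = ((x + a : ℝ) : ℂ) + t * Complex.I := by push_cast; ring
  set L : ℕ → ℝ := fun n => 2 * log ‖Complex.GammaSeq (x + t * Complex.I) n‖
    - 2 * log ‖Complex.GammaSeq (x + a + t * Complex.I) n‖ + a * log (x ^ 2 + t ^ 2)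
    - a * (log ((x + 1 + n) ^ 2 + t ^ 2) - 2 * log n)
  have hL : Tendsto L atTop (𝓝 (2 * (log ‖Complex.Gamma (x + t * Complex.I)‖
      - log ‖Complex.Gamma (x + a + t * Complex.I)‖ + a / 2 * log (x ^ 2 + t ^ 2)))) := by
    have hz := tendsto_log_norm_GammaSeq (s := x + t * Complex.I) (by simp; linarith)
    have hw := tendsto_log_norm_GammaSeq (s := x + a + t * Complex.I) (by simp; linarith)
    have hlog := tendsto_log_sq_add_sq_sub_two_mul_log (c := x + 1) (by linarith) t
    convert (((hz.const_mul 2).sub (hw.const_mul 2)).add_const _).sub (hlog.const_mul a) using 2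
    ring
  have hbound : ∀ᶠ n in atTop, |L n| ≤ 4 * a ^ 2 + 4 * a := by
    filter_upwards [eventually_ne_atTop 0] with n hn
    have hz := two_mul_log_norm_GammaSeq (by linarith : 0 < x) t hn
    have hw := two_mul_log_norm_GammaSeq (by linarith : 0 < x + a) t hn
    rw [← hxa] at hw
    convert abs_sum_log_sq_add_sq_sub_le hx ha t (n + 1) using 2
    simp only [L, hz, hw, Nat.cast_add, Nat.cast_one]
    rw [sum_sub_distrib, show x + (n + 1) = x + 1 + n by ring]
    simp only [add_right_comm x a]
    ring
  have := le_of_tendsto hL.abs hbound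
  rw [abs_mul, abs_two] at this
  linarith

lemma abs_log_one_add_mul_sq_sub_two_mul_log_le {c : ℝ} (hc : 1 ≤ |c|) (ξ : ℝ) :
    |log (1 + (c * ξ) ^ 2) - 2 * log (1 + |ξ|)| ≤ 2 * log |c| + log 2 := by
  have hξ : 0 < 1 + |ξ| := by positivity
  have hc2 : 1 ≤ c ^ 2 := one_le_sq_iff_one_le_abs c |>.mpr hc
  have hupper : 1 + (c * ξ) ^ 2 ≤ |c| ^ 2 * (1 + |ξ|) ^ 2 := by
    nlinarith [sq_abs c, sq_abs ξ, abs_nonneg ξ, hc2]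
  have hlower : (1 + |ξ|) ^ 2 / 2 ≤ 1 + (c * ξ) ^ 2 := by
    nlinarith [sq_abs ξ, sq_nonneg (1 - |ξ|), mul_le_mul_of_nonneg_right hc2 (sq_nonneg ξ)]
  have hlog_upper := log_le_log (by positivity) hupper
  have hlog_lower := log_le_log (by positivity) hlower
  rw [log_mul (by positivity) (by positivity), log_pow, log_pow, Nat.cast_ofNat] at hlog_upper
  rw [log_div (by positivity) two_ne_zero, log_pow, Nat.cast_ofNat] at hlog_lower
  have hc0 : 0 ≤ log |c| := log_nonneg hc
  rw [abs_le]; constructor <;> linarith [log_pos one_lt_two]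

lemma exp_neg_mul_le_and_le_exp_mul_of_abs_log_sub_le {u v D : ℝ} (hu : 0 < u) (hv : 0 < v)
    (h : |log u - log v| ≤ D) : exp (-D) * v ≤ u ∧ u ≤ exp D * v := by
  rw [← exp_log hu, ← exp_log hv, ← exp_add, ← exp_add, exp_le_exp, exp_le_exp]
  constructor <;> linarith [abs_le.mp h]

theorem stmt3 (α : ℝ) (hα : 0 < α) :
    ∃ A B : ℝ, 0 < A ∧ 0 < B ∧ ∀ ξ : ℝ,
      A * (1 + |ξ|) ^ (-α) ≤
        ‖Complex.Gamma (α + 1) * Complex.Gamma (1 - 2 * π * Complex.I * ξ) /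
          Complex.Gamma (α + 1 - 2 * π * Complex.I * ξ)‖ ∧
      ‖Complex.Gamma (α + 1) * Complex.Gamma (1 - 2 * π * Complex.I * ξ) /
          Complex.Gamma (α + 1 - 2 * π * Complex.I * ξ)‖ ≤ B * (1 + |ξ|) ^ (-α) := by
  have hΓ_pos : ∀ s : ℂ, 0 < s.re → 0 < ‖Complex.Gamma s‖ := fun s hs =>
    norm_pos_iff.mpr (Complex.Gamma_ne_zero_of_re_pos hs)
  set G := ‖Complex.Gamma (α + 1)‖
  have hG : 0 < G := hΓ_pos _ (by simp; linarith)
  set D := 2 * α ^ 2 + 2 * α + α / 2 * (2 * log (2 * π) + log 2)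
  refine ⟨exp (-D) * G, exp D * G, by positivity, by positivity, fun ξ => ?_⟩
  set t := -(2 * π) * ξ
  have hz_eq : (1 : ℂ) - 2 * π * Complex.I * ξ = (1 : ℝ) + t * Complex.I := by
    push_cast [t]; ring
  have hw_eq : (α : ℂ) + 1 - 2 * π * Complex.I * ξ = (1 : ℝ) + α + t * Complex.I := by
    push_cast [t]; ring
  set Γz := ‖Complex.Gamma ((1 : ℝ) + t * Complex.I)‖
  set Γw := ‖Complex.Gamma ((1 : ℝ) + α + t * Complex.I)‖
  have hz : 0 < Γz := hΓ_pos _ (by simp)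
  have hw : 0 < Γw := hΓ_pos _ (by simp; linarith)
  have hratio := abs_log_norm_Gamma_sub_log_norm_Gamma_add_le le_rfl hα.le t
  have hpoly := abs_log_one_add_mul_sq_sub_two_mul_log_le
    (c := -(2 * π)) (by rw [abs_neg, abs_of_pos two_pi_pos]; linarith [pi_gt_three]) ξ
  rw [one_pow] at hratio
  rw [abs_neg, abs_of_pos two_pi_pos] at hpoly
  have hlog : |log (G * Γz / Γw) - log (G * (1 + |ξ|) ^ (-α))| ≤ D := by
    rw [log_div (by positivity) hw.ne', log_mul hG.ne' hz.ne', log_mul hG.ne' (by positivity),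
      log_rpow (by positivity)]
    calc _ = |(log Γz - log Γw + α / 2 * log (1 + t ^ 2))
          - α / 2 * (log (1 + t ^ 2) - 2 * log (1 + |ξ|))| := by congr 1; ring
      _ ≤ _ := by grw [abs_sub, abs_mul, abs_of_pos (by positivity : 0 < α / 2), hratio, hpoly]
  rw [hz_eq, hw_eq, norm_div, norm_mul, mul_assoc, mul_assoc]
  exact exp_neg_mul_le_and_le_exp_mul_of_abs_log_sub_le (by positivity) (by positivity) hlog
end

section
/- Let Φ : [0,∞) → [0,∞) be continuous, increasing, with Φ(0) = 0 and t ↦ Φ(√t) concave. Let r₁, …, r_N be the Rademacher functions on [0,1] and c₁, …, c_N real numbers, and set F(t) = Σ_j c_j r_j(t). Then ∫₀¹ Φ(|F(t)|) dt ≤ Σ_j Φ(|c_j|). -/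
/-!
Put `G s = Φ (√s)`, so that `Φ |F| = G (F²)`. Since the Rademacher functions are
orthonormal on `[0, 1]`, `∫ F² = ∑ c_j²`; Jensen's inequality for the concave `G` gives
`∫ G (F²) ≤ G (∫ F²) = G (∑ c_j²)`, and a concave `G` with `G 0 = 0` is subadditive on
`[0, ∞)`, so `G (∑ c_j²) ≤ ∑ G (c_j²) = ∑ Φ |c_j|`.

Orthonormality follows from self-similarity: `r_{j+1} t = r_j (2t)`, and `r_j` is 1-periodic
for `j ≥ 1` while `r_0 (t + 1) = - r_0 t`. Splitting `[0, 2]` at `1` therefore reduces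
`∫ r_i r_j` to `∫ r_1 r_{j-i+1}`, which vanishes, and `∫ r_j²` to `∫ r_0² = 1`.
-/

open Real MeasureTheory

noncomputable def rademacher (j : ℕ) (t : ℝ) : ℝ :=
  Real.sign (Real.sin (2 ^ j * π * t))

open Set

section Concave

variable {G : ℝ → ℝ}

theorem ConcaveOn.mul_le_map_mul (hG : ConcaveOn ℝ (Ici 0) G) (hG0 : 0 ≤ G 0) {t x : ℝ}
    (ht₀ : 0 ≤ t) (ht₁ : t ≤ 1) (hx : 0 ≤ x) : t * G x ≤ G (t * x) := by
  have h := hG.2 (mem_Ici.2 hx) (mem_Ici.2 le_rfl) ht₀ (sub_nonneg.2 ht₁) (by ring)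
  simp only [smul_eq_mul, mul_zero, add_zero] at h
  nlinarith [mul_nonneg (sub_nonneg.2 ht₁) hG0]

theorem ConcaveOn.map_add_le_add (hG : ConcaveOn ℝ (Ici 0) G) (hG0 : 0 ≤ G 0) {a b : ℝ}
    (ha : 0 ≤ a) (hb : 0 ≤ b) : G (a + b) ≤ G a + G b := by
  rcases (add_nonneg ha hb).eq_or_lt with hs | hs
  · obtain ⟨rfl, rfl⟩ : a = 0 ∧ b = 0 := ⟨by linarith, by linarith⟩
    simpa using hG0
  have hsplit : ∀ x, x / (a + b) * (a + b) = x := fun x => div_mul_cancel₀ x hs.ne'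
  calc G (a + b) = a / (a + b) * G (a + b) + b / (a + b) * G (a + b) := by
        rw [← add_mul, ← add_div, div_self hs.ne', one_mul]
    _ ≤ G (a / (a + b) * (a + b)) + G (b / (a + b) * (a + b)) := by
        gcongr <;> apply hG.mul_le_map_mul hG0 (by positivity) _ hs.le
        · exact div_le_one_of_le₀ (by linarith) hs.le
        · exact div_le_one_of_le₀ (by linarith) hs.le
    _ = G a + G b := by rw [hsplit, hsplit]

theorem ConcaveOn.map_sum_le_sum {ι : Type*} (hG : ConcaveOn ℝ (Ici 0) G) (hG0 : G 0 = 0)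
    (s : Finset ι) {a : ι → ℝ} (ha : ∀ i ∈ s, 0 ≤ a i) :
    G (∑ i ∈ s, a i) ≤ ∑ i ∈ s, G (a i) :=
  Finset.le_sum_of_subadditive_on_pred G (0 ≤ ·) hG0.le
    (fun _ _ => hG.map_add_le_add hG0.ge) (fun _ _ => add_nonneg) a ha

end Concave

theorem integral_sq_sum_mul_of_orthonormal {α ι : Type*} [MeasurableSpace α] {μ : Measure α}
    (s : Finset ι) (c : ι → ℝ) {f : ι → α → ℝ}
    (hint : ∀ i ∈ s, ∀ j ∈ s, Integrable (fun x => f i x * f j x) μ)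
    (hnorm : ∀ i ∈ s, ∫ x, f i x * f i x ∂μ = 1)
    (horth : ∀ i ∈ s, ∀ j ∈ s, i ≠ j → ∫ x, f i x * f j x ∂μ = 0) :
    ∫ x, (∑ i ∈ s, c i * f i x) ^ 2 ∂μ = ∑ i ∈ s, c i ^ 2 := by
  have hexpand : ∀ x, (∑ i ∈ s, c i * f i x) ^ 2 =
      ∑ i ∈ s, ∑ j ∈ s, c i * c j * (f i x * f j x) := fun x => by
    rw [sq, Finset.sum_mul_sum]
    exact Finset.sum_congr rfl fun i _ => Finset.sum_congr rfl fun j _ => by ring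
  have hint' : ∀ i ∈ s, ∀ j ∈ s, Integrable (fun x => c i * c j * (f i x * f j x)) μ :=
    fun i hi j hj => (hint i hi j hj).const_mul _
  simp_rw [hexpand]
  rw [integral_finsetSum _ fun i hi => integrable_finsetSum _ (hint' i hi)]
  refine Finset.sum_congr rfl fun i hi => ?_
  rw [integral_finsetSum _ (hint' i hi), Finset.sum_eq_single_of_mem i hi, integral_const_mul,
    hnorm i hi, mul_one, sq]
  intro j hj hji
  rw [integral_const_mul, horth i hi j hj hji.symm, mul_zero]

theorem Continuous.integrable_comp_of_bounded {α : Type*} [MeasurableSpace α] {μ : Measure α}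
    [IsFiniteMeasure μ] {g : ℝ → ℝ} (hg : Continuous g) {f : α → ℝ} (hf : Measurable f) {M : ℝ}
    (hM : ∀ x, |f x| ≤ M) : Integrable (g ∘ f) μ := by
  obtain ⟨C, hC⟩ :=
    (isCompact_Icc (a := -M) (b := M)).exists_bound_of_continuousOn hg.continuousOn
  exact Integrable.of_bound (hg.measurable.comp hf).aestronglyMeasurable C
    (ae_of_all _ fun x => hC _ (abs_le.1 (hM x)))

theorem intervalIntegral.integral_comp_two_mul {g : ℝ → ℝ}
    (hg : IntervalIntegrable g volume 0 2) :
    ∫ t in (0 : ℝ)..1, g (2 * t) =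
      ((∫ t in (0 : ℝ)..1, g t) + ∫ t in (0 : ℝ)..1, g (t + 1)) / 2 := by
  have h01 : IntervalIntegrable g volume 0 1 :=
    hg.mono_set (uIcc_subset_uIcc (by norm_num [mem_uIcc]) (by norm_num [mem_uIcc]))
  have h12 : IntervalIntegrable g volume 1 2 :=
    hg.mono_set (uIcc_subset_uIcc (by norm_num [mem_uIcc]) (by norm_num [mem_uIcc]))
  rw [integral_comp_mul_left _ two_ne_zero, integral_comp_add_right, mul_zero, mul_one, zero_add,
    one_add_one_eq_two, ← integral_add_adjacent_intervals h01 h12, smul_eq_mul]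
  ring

theorem measurable_rademacher (j : ℕ) : Measurable (rademacher j) := by
  have hsign : Measurable Real.sign :=
    Measurable.ite (measurableSet_lt measurable_id measurable_const) measurable_const
      (Measurable.ite (measurableSet_lt measurable_const measurable_id) measurable_const
        measurable_const)
  exact hsign.comp (continuous_sin.comp (continuous_const.mul continuous_id)).measurable

theorem abs_rademacher_le (j : ℕ) (t : ℝ) : |rademacher j t| ≤ 1 := by
  rcases Real.sign_apply_eq (sin (2 ^ j * π * t)) with h | h | h <;>
    simp [rademacher, h]

theorem rademacher_succ (j : ℕ) (t : ℝ) : rademacher (j + 1) t = rademacher j (2 * t) := by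
  simp only [rademacher, pow_succ]
  ring_nf

theorem rademacher_succ_add_one (j : ℕ) (t : ℝ) :
    rademacher (j + 1) (t + 1) = rademacher (j + 1) t := by
  have h : 2 ^ (j + 1) * π * (t + 1) = 2 ^ (j + 1) * π * t + (2 ^ j : ℕ) * (2 * π) := by
    push_cast; ring
  rw [rademacher, h, sin_add_nat_mul_two_pi, rademacher]

theorem rademacher_zero_add_one (t : ℝ) : rademacher 0 (t + 1) = -rademacher 0 t := by
  simp only [rademacher, pow_zero, one_mul, mul_add, mul_one, sin_add_pi, Real.sign_neg]

theorem rademacher_mul_self_add_one (j : ℕ) (t : ℝ) :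
    rademacher j (t + 1) * rademacher j (t + 1) = rademacher j t * rademacher j t := by
  cases j with
  | zero => rw [rademacher_zero_add_one, neg_mul_neg]
  | succ j => rw [rademacher_succ_add_one]

theorem rademacher_zero_of_mem_Ioo {t : ℝ} (ht : t ∈ Ioo 0 1) : rademacher 0 t = 1 := by
  rw [rademacher, pow_zero, one_mul, mul_comm]
  exact Real.sign_of_pos (sin_pos_of_pos_of_lt_pi (by nlinarith [ht.1, pi_pos])
    (by nlinarith [ht.2, pi_pos]))

theorem intervalIntegrable_rademacher_mul (i j : ℕ) (a b : ℝ) :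
    IntervalIntegrable (fun t => rademacher i t * rademacher j t) volume a b := by
  refine (intervalIntegrable_const (c := (1 : ℝ))).mono_fun'
    ((measurable_rademacher i).mul (measurable_rademacher j)).aestronglyMeasurable
    (ae_of_all _ fun t => ?_)
  dsimp only
  rw [norm_mul, Real.norm_eq_abs, Real.norm_eq_abs, ← one_mul (1 : ℝ)]
  exact mul_le_mul (abs_rademacher_le i t) (abs_rademacher_le j t) (abs_nonneg _) zero_le_one

theorem integral_rademacher_succ_mul_succ (i j : ℕ) :
    ∫ t in (0 : ℝ)..1, rademacher (i + 1) t * rademacher (j + 1) t =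
      ((∫ t in (0 : ℝ)..1, rademacher i t * rademacher j t) +
        ∫ t in (0 : ℝ)..1, rademacher i (t + 1) * rademacher j (t + 1)) / 2 := by
  simp_rw [rademacher_succ i, rademacher_succ j]
  exact intervalIntegral.integral_comp_two_mul (intervalIntegrable_rademacher_mul i j 0 2)

theorem integral_rademacher_mul_self (j : ℕ) :
    ∫ t in (0 : ℝ)..1, rademacher j t * rademacher j t = 1 := by
  induction j with
  | zero =>
    rw [intervalIntegral.integral_of_le zero_le_one, integral_Ioc_eq_integral_Ioo,
      setIntegral_congr_fun measurableSet_Ioo (g := fun _ => 1) fun t ht => by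
        rw [rademacher_zero_of_mem_Ioo ht, mul_one]]
    simp
  | succ j ih =>
    simp_rw [integral_rademacher_succ_mul_succ, rademacher_mul_self_add_one, ih]
    norm_num

theorem integral_rademacher_one_mul (j : ℕ) :
    ∫ t in (0 : ℝ)..1, rademacher 1 t * rademacher (j + 2) t = 0 := by
  simp_rw [integral_rademacher_succ_mul_succ 0 (j + 1), rademacher_zero_add_one,
    rademacher_succ_add_one, neg_mul, intervalIntegral.integral_neg]
  ring

theorem integral_rademacher_mul_of_lt {i j : ℕ} (hi : 1 ≤ i) (hij : i < j) :
    ∫ t in (0 : ℝ)..1, rademacher i t * rademacher j t = 0 := by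
  obtain ⟨k, rfl⟩ := Nat.exists_eq_add_of_le' hi
  obtain ⟨m, rfl⟩ := Nat.exists_eq_add_of_lt hij
  induction k with
  | zero => simpa [add_comm 1 m] using integral_rademacher_one_mul m
  | succ k ih =>
    rw [show k + 1 + 1 + m + 1 = (k + 1 + m + 1) + 1 by ring, integral_rademacher_succ_mul_succ]
    simp_rw [rademacher_succ_add_one]
    rw [ih (by omega) (by omega)]
    norm_num

theorem integral_sq_sum_mul_rademacher_succ (N : ℕ) (c : ℕ → ℝ) :
    ∫ t in Icc (0 : ℝ) 1, (∑ j ∈ Finset.range N, c j * rademacher (j + 1) t) ^ 2 =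
      ∑ j ∈ Finset.range N, c j ^ 2 := by
  have hIcc : ∀ f : ℝ → ℝ, ∫ t in Icc (0 : ℝ) 1, f t = ∫ t in (0 : ℝ)..1, f t := fun f => by
    rw [integral_Icc_eq_integral_Ioc, intervalIntegral.integral_of_le zero_le_one]
  refine integral_sq_sum_mul_of_orthonormal _ c
    (fun i _ j _ => (intervalIntegrable_iff_integrableOn_Icc_of_le zero_le_one).1
      (intervalIntegrable_rademacher_mul (i + 1) (j + 1) 0 1))
    (fun i _ => by rw [hIcc, integral_rademacher_mul_self]) (fun i _ j _ hij => ?_)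
  rw [hIcc]
  rcases lt_or_gt_of_ne hij with h | h
  · exact integral_rademacher_mul_of_lt (by omega) (by omega)
  · simp_rw [mul_comm (rademacher (i + 1) _)]
    exact integral_rademacher_mul_of_lt (by omega) (by omega)

instance : IsProbabilityMeasure (volume.restrict (Icc (0 : ℝ) 1)) :=
  ⟨by simp [Real.volume_Icc]⟩

theorem stmt7_general (Φ : ℝ → ℝ)
    (hcont : ContinuousOn Φ (Set.Ici 0))
    (h0 : Φ 0 = 0)
    (hconc : ConcaveOn ℝ (Set.Ici 0) (fun t => Φ (Real.sqrt t)))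
    (N : ℕ) (c : ℕ → ℝ) :
    ∫ t in Set.Icc (0 : ℝ) 1,
        Φ |∑ j ∈ Finset.range N, c j * rademacher (j + 1) t| ≤
      ∑ j ∈ Finset.range N, Φ |c j| := by
  set G : ℝ → ℝ := fun s => Φ (√s)
  have hG : Continuous G := hcont.comp_continuous continuous_sqrt fun s => sqrt_nonneg s
  have hG_sq : ∀ x, G (x ^ 2) = Φ |x| := fun x => by simp only [G, sqrt_sq_eq_abs]
  set F : ℝ → ℝ := fun t => ∑ j ∈ Finset.range N, c j * rademacher (j + 1) t
  have hF : Measurable F :=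
    Finset.measurable_sum _ fun j _ => (measurable_rademacher (j + 1)).const_mul (c j)
  have hF_le : ∀ t, |F t| ≤ ∑ j ∈ Finset.range N, |c j| := fun t =>
    (Finset.abs_sum_le_sum_abs _ _).trans <| Finset.sum_le_sum fun j _ => by
      rw [abs_mul]
      exact mul_le_of_le_one_right (abs_nonneg _) (abs_rademacher_le _ t)
  calc ∫ t in Icc (0 : ℝ) 1, Φ |F t|
      = ∫ t in Icc (0 : ℝ) 1, G (F t ^ 2) := by simp_rw [hG_sq]
    _ ≤ G (∫ t in Icc (0 : ℝ) 1, F t ^ 2) :=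
      hconc.le_map_integral hG.continuousOn isClosed_Ici (ae_of_all _ fun t => sq_nonneg (F t))
        ((continuous_pow 2).integrable_comp_of_bounded hF hF_le)
        ((hG.comp (continuous_pow 2)).integrable_comp_of_bounded hF hF_le)
    _ = G (∑ j ∈ Finset.range N, c j ^ 2) := by rw [integral_sq_sum_mul_rademacher_succ]
    _ ≤ ∑ j ∈ Finset.range N, G (c j ^ 2) :=
      hconc.map_sum_le_sum (by simp [G, h0]) _ fun j _ => sq_nonneg _
    _ = ∑ j ∈ Finset.range N, Φ |c j| := by simp_rw [hG_sq]

theorem stmt7 (Φ : ℝ → ℝ)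
    (hcont : ContinuousOn Φ (Set.Ici 0))
    (hmono : MonotoneOn Φ (Set.Ici 0))
    (hnonneg : ∀ t ≥ (0 : ℝ), 0 ≤ Φ t)
    (h0 : Φ 0 = 0)
    (hconc : ConcaveOn ℝ (Set.Ici 0) (fun t => Φ (Real.sqrt t)))
    (N : ℕ) (c : ℕ → ℝ) :
    ∫ t in Set.Icc (0 : ℝ) 1,
        Φ |∑ j ∈ Finset.range N, c j * rademacher (j + 1) t| ≤
      ∑ j ∈ Finset.range N, Φ |c j| :=
  stmt7_general Φ hcont h0 hconc N c
end

section
/- Suppose T maps L¹(ℝ) (vector-valued or scalar) into measurable functions on ℝ and satisfies, for all λ > 0 and f ∈ L¹, the estimate |{x : |Tf(x)| > λ}| ≤ C₁ λ^{-q} ∫_{|f| ≤ λ} |f|^q dx + C₂ λ^{-1} ∫_{|f| > λ} |f| dx, with 1 < q < ∞. If |f|(log(2+|f|))^{ℓ+1} is integrable over ℝ for some ℓ ≥ 0, then for every compact set B ⊂ ℝ, ∫_B |Tf(x)| (log(2+|Tf(x)|))^ℓ dx ≤ C_{ℓ,B} (1 + ∫_ℝ |f(x)| (log(2+|f(x)|))^{ℓ+1}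 dx). -/
/-!
Split the range of `|T f|` dyadically: on `{2^k < |T f| ≤ 2^(k+1)}` the integrand
`|T f| log(2 + |T f|)^ℓ` is at most `c_k = 2^(k+1) (k+2)^ℓ`, so its integral over `B` is at most
`c_0 |B| + ∑_k c_k |{|T f| > 2^k}|`. Insert the weak-type estimate at `λ = 2^k` and sum under the
integral. With `2^(k₀-1) < t ≤ 2^k₀`, a point where `|f| = t` receives `2 C₂ (k+2)^ℓ t` from each of
the `k₀ ≈ log t` scales below `t`, and `2 C₁ (k+2)^ℓ 2^(k(1-q)) t^q` from each scale `k ≥ k₀`, a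
tail dominated by its first term since `q > 1`. Both total `O(t log(2+t)^(ℓ+1))`.
-/

open Real MeasureTheory

lemma log_two_add_le {t : ℝ} {k : ℕ} (ht : 0 ≤ t) (h : t ≤ 2 ^ (k + 1)) :
    log (2 + t) ≤ k + 2 := by
  have h2 : (2 : ℝ) ≤ 2 ^ (k + 1) := le_self_pow₀ one_le_two (by omega)
  have hpow : 2 + t ≤ (2 : ℝ) ^ (k + 2) := by rw [pow_succ]; linarith
  calc log (2 + t) ≤ log (2 ^ (k + 2)) := log_le_log (by linarith) hpow
    _ = (k + 2) * log 2 := by rw [Real.log_pow]; push_cast; ring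
    _ ≤ k + 2 := mul_le_of_le_one_right (by positivity) (log_two_lt_d9.le.trans (by norm_num))

lemma nat_add_two_le_five_mul_log {t : ℝ} {k : ℕ} (ht : 0 ≤ t) (h : (2 : ℝ) ^ k ≤ 2 + 2 * t) :
    (k : ℝ) + 2 ≤ 5 * log (2 + t) := by
  have hpow : (2 : ℝ) ^ (k + 2) ≤ (2 + t) ^ 3 := by
    rw [pow_add]; nlinarith [sq_nonneg t, mul_nonneg ht (sq_nonneg t)]
  have hlog : ((k : ℝ) + 2) * log 2 ≤ 3 * log (2 + t) := by
    have := log_le_log (by positivity) hpow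
    rw [Real.log_pow, Real.log_pow] at this
    exact_mod_cast this
  nlinarith [log_two_gt_d9, log_nonneg (by linarith : (1 : ℝ) ≤ 2 + t)]

lemma exists_dyadic_scale {t : ℝ} (ht : 0 ≤ t) :
    ∃ k₀ : ℕ, (∀ k : ℕ, t ≤ 2 ^ k ↔ k₀ ≤ k) ∧ (2 : ℝ) ^ k₀ ≤ 2 + 2 * t := by
  classical
  have hex : ∃ k : ℕ, t ≤ 2 ^ k := (pow_unbounded_of_one_lt t one_lt_two).imp fun _ h => h.le
  refine ⟨Nat.find hex, fun k => ⟨fun hk => Nat.find_min' hex hk, fun hk => ?_⟩, ?_⟩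
  · exact (Nat.find_spec hex).trans (pow_le_pow_right₀ one_le_two hk)
  by_cases h0 : Nat.find hex = 0
  · rw [h0]; linarith
  · obtain ⟨m, hm⟩ := Nat.exists_eq_add_one_of_ne_zero h0
    have hlt : (2 : ℝ) ^ m < t := not_le.1 (Nat.find_min hex (by omega))
    rw [hm, pow_succ]; linarith

lemma summable_add_two_rpow_mul_geometric (a : ℝ) {r : ℝ} (hr0 : 0 < r) (hr1 : r < 1) :
    Summable fun j : ℕ => ((j : ℝ) + 2) ^ a * r ^ j := by
  set m := ⌈a⌉₊
  have hshift : Summable fun j : ℕ => ((j : ℝ) + 2) ^ m * r ^ (j + 2) := by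
    have := (summable_nat_add_iff (f := fun n : ℕ => (n : ℝ) ^ m * r ^ n) 2).2
      (summable_pow_mul_geometric_of_norm_lt_one m (by rwa [norm_of_nonneg hr0.le]))
    simpa only [Nat.cast_add, Nat.cast_ofNat] using this
  have hnat : Summable fun j : ℕ => ((j : ℝ) + 2) ^ m * r ^ j :=
    (hshift.mul_left (r ^ 2)⁻¹).congr fun j => by field_simp; ring
  refine hnat.of_nonneg_of_le (fun j => by positivity) fun j => ?_
  gcongr
  calc ((j : ℝ) + 2) ^ a ≤ ((j : ℝ) + 2) ^ (m : ℝ) :=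
        rpow_le_rpow_of_exponent_le (by linarith [j.cast_nonneg (α := ℝ)]) (Nat.le_ceil a)
    _ = _ := rpow_natCast _ _

lemma rpow_one_sub_mul_rpow_le {s t q : ℝ} (ht : 0 ≤ t) (hts : t ≤ s) (hq : 1 ≤ q) :
    s ^ (1 - q) * t ^ q ≤ t := by
  rcases ht.eq_or_lt with rfl | ht
  · simp [zero_rpow (by linarith : q ≠ 0)]
  calc s ^ (1 - q) * t ^ q ≤ t ^ (1 - q) * t ^ q := by
        gcongr ?_ * _
        exact rpow_le_rpow_of_nonpos ht hts (by linarith)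
    _ = t := by rw [← rpow_add ht]; simp

noncomputable section Dyadic

open Finset

def dyadicWeight (ℓ : ℝ) (k : ℕ) : ℝ := 2 ^ (k + 1) * ((k : ℝ) + 2) ^ ℓ

def weakTypeIntegrand (q C₁ C₂ lam t : ℝ) : ℝ :=
  if t ≤ lam then C₁ * lam ^ (-q) * t ^ q else C₂ * lam⁻¹ * t

def weakTypeLogConst (q ℓ C₁ C₂ : ℝ) : ℝ :=
  5 ^ (ℓ + 1) * (2 * C₂ + C₁ * ∑' j : ℕ, ((j : ℝ) + 2) ^ ℓ * ((2 : ℝ) ^ (1 - q)) ^ j)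

variable {q ℓ C₁ C₂ t : ℝ}

lemma dyadicWeight_nonneg (ℓ : ℝ) (k : ℕ) : 0 ≤ dyadicWeight ℓ k := by
  unfold dyadicWeight; positivity

lemma weakTypeLogConst_nonneg (hC₁ : 0 ≤ C₁) (hC₂ : 0 ≤ C₂) : 0 ≤ weakTypeLogConst q ℓ C₁ C₂ := by
  unfold weakTypeLogConst
  positivity

lemma weakTypeIntegrand_nonneg (hC₁ : 0 ≤ C₁) (hC₂ : 0 ≤ C₂) {lam : ℝ} (hlam : 0 ≤ lam)
    (ht : 0 ≤ t) : 0 ≤ weakTypeIntegrand q C₁ C₂ lam t := by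
  unfold weakTypeIntegrand; split_ifs <;> positivity

lemma dyadicWeight_mul_weakTypeIntegrand_of_lt {k : ℕ} (h : (2 : ℝ) ^ k < t) :
    dyadicWeight ℓ k * weakTypeIntegrand q C₁ C₂ (2 ^ k) t = 2 * C₂ * ((k : ℝ) + 2) ^ ℓ * t := by
  rw [dyadicWeight, weakTypeIntegrand, if_neg h.not_ge, pow_succ]
  field_simp

lemma dyadicWeight_mul_weakTypeIntegrand_le (hq : 1 ≤ q) (hC₁ : 0 ≤ C₁) (hℓ : 0 ≤ ℓ)
    (ht : 0 ≤ t) {k₀ : ℕ} (hk₀ : t ≤ 2 ^ k₀) (j : ℕ) :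
    dyadicWeight ℓ (k₀ + j) * weakTypeIntegrand q C₁ C₂ (2 ^ (k₀ + j)) t ≤
      2 * C₁ * ((k₀ : ℝ) + 2) ^ ℓ * t * (((j : ℝ) + 2) ^ ℓ * ((2 : ℝ) ^ (1 - q)) ^ j) := by
  have hle : t ≤ 2 ^ (k₀ + j) := hk₀.trans (pow_le_pow_right₀ one_le_two (by omega))
  have hpow : (2 : ℝ) ^ (k₀ + j) * ((2 : ℝ) ^ (k₀ + j)) ^ (-q) =
      ((2 : ℝ) ^ (1 - q)) ^ j * ((2 : ℝ) ^ k₀) ^ (1 - q) := by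
    rw [rpow_pow_comm zero_le_two, pow_add, mul_rpow (by positivity) (by positivity),
      rpow_sub (by positivity), rpow_sub (by positivity), rpow_neg (by positivity),
      rpow_neg (by positivity), rpow_one, rpow_one]
    ring
  have hweight : ((↑(k₀ + j) : ℝ) + 2) ^ ℓ ≤ ((k₀ : ℝ) + 2) ^ ℓ * ((j : ℝ) + 2) ^ ℓ := by
    rw [← mul_rpow (by positivity) (by positivity)]
    gcongr
    push_cast
    nlinarith [Nat.cast_nonneg (α := ℝ) k₀, Nat.cast_nonneg (α := ℝ) j]
  calc dyadicWeight ℓ (k₀ + j) * weakTypeIntegrand q C₁ C₂ (2 ^ (k₀ + j)) t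
      = 2 * C₁ * ((↑(k₀ + j) : ℝ) + 2) ^ ℓ * ((2 : ℝ) ^ (1 - q)) ^ j *
          (((2 : ℝ) ^ k₀) ^ (1 - q) * t ^ q) := by
        rw [dyadicWeight, weakTypeIntegrand, if_pos hle, pow_succ]
        linear_combination (2 * C₁ * ((↑(k₀ + j) : ℝ) + 2) ^ ℓ * t ^ q) * hpow
    _ ≤ 2 * C₁ * (((k₀ : ℝ) + 2) ^ ℓ * ((j : ℝ) + 2) ^ ℓ) * ((2 : ℝ) ^ (1 - q)) ^ j * t := by
        gcongr
        exact rpow_one_sub_mul_rpow_le ht hk₀ hq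
    _ = _ := by ring

lemma sum_range_dyadicWeight_mul_weakTypeIntegrand_below_le (hC₂ : 0 ≤ C₂) (hℓ : 0 ≤ ℓ)
    (ht : 0 ≤ t) {k₀ : ℕ} (hbelow : ∀ k < k₀, (2 : ℝ) ^ k < t) :
    ∑ k ∈ range k₀, dyadicWeight ℓ k * weakTypeIntegrand q C₁ C₂ (2 ^ k) t ≤
      2 * C₂ * ((k₀ : ℝ) + 2) ^ (ℓ + 1) * t := by
  calc ∑ k ∈ range k₀, dyadicWeight ℓ k * weakTypeIntegrand q C₁ C₂ (2 ^ k) t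
      ≤ ∑ _k ∈ range k₀, 2 * C₂ * ((k₀ : ℝ) + 2) ^ ℓ * t := by
        refine sum_le_sum fun k hk => ?_
        rw [dyadicWeight_mul_weakTypeIntegrand_of_lt (hbelow k (mem_range.1 hk))]
        gcongr
        exact_mod_cast (mem_range.1 hk).le
    _ = k₀ * (2 * C₂ * ((k₀ : ℝ) + 2) ^ ℓ * t) := by simp
    _ ≤ ((k₀ : ℝ) + 2) * (2 * C₂ * ((k₀ : ℝ) + 2) ^ ℓ * t) := by gcongr; linarith
    _ = _ := by rw [rpow_add_one (by positivity)]; ring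

lemma sum_range_dyadicWeight_mul_weakTypeIntegrand_above_le (hq : 1 < q) (hC₁ : 0 ≤ C₁)
    (hℓ : 0 ≤ ℓ) (ht : 0 ≤ t) {k₀ : ℕ} (hk₀ : t ≤ 2 ^ k₀) (n : ℕ) :
    ∑ j ∈ range n, dyadicWeight ℓ (k₀ + j) * weakTypeIntegrand q C₁ C₂ (2 ^ (k₀ + j)) t ≤
      C₁ * (∑' j : ℕ, ((j : ℝ) + 2) ^ ℓ * ((2 : ℝ) ^ (1 - q)) ^ j) *
        ((k₀ : ℝ) + 2) ^ (ℓ + 1) * t := by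
  set S := ∑' j : ℕ, ((j : ℝ) + 2) ^ ℓ * ((2 : ℝ) ^ (1 - q)) ^ j
  have hsum : Summable fun j : ℕ => ((j : ℝ) + 2) ^ ℓ * ((2 : ℝ) ^ (1 - q)) ^ j :=
    summable_add_two_rpow_mul_geometric ℓ (by positivity)
      (rpow_lt_one_of_one_lt_of_neg one_lt_two (by linarith))
  calc ∑ j ∈ range n, dyadicWeight ℓ (k₀ + j) * weakTypeIntegrand q C₁ C₂ (2 ^ (k₀ + j)) t
      ≤ ∑ j ∈ range n, 2 * C₁ * ((k₀ : ℝ) + 2) ^ ℓ * t *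
          (((j : ℝ) + 2) ^ ℓ * ((2 : ℝ) ^ (1 - q)) ^ j) :=
        sum_le_sum fun j _ => dyadicWeight_mul_weakTypeIntegrand_le hq.le hC₁ hℓ ht hk₀ j
    _ ≤ 2 * C₁ * ((k₀ : ℝ) + 2) ^ ℓ * t * S := by
        rw [← mul_sum]
        gcongr
        exact hsum.sum_le_tsum _ fun j _ => by positivity
    _ ≤ ((k₀ : ℝ) + 2) * (C₁ * ((k₀ : ℝ) + 2) ^ ℓ * t * S) := by
        have : 0 ≤ C₁ * ((k₀ : ℝ) + 2) ^ ℓ * t * S := by positivity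
        nlinarith [Nat.cast_nonneg (α := ℝ) k₀]
    _ = _ := by rw [rpow_add_one (by positivity)]; ring

lemma sum_range_dyadicWeight_mul_weakTypeIntegrand_le (hq : 1 < q) (hC₁ : 0 ≤ C₁)
    (hC₂ : 0 ≤ C₂) (hℓ : 0 ≤ ℓ) (ht : 0 ≤ t) (n : ℕ) :
    ∑ k ∈ range n, dyadicWeight ℓ k * weakTypeIntegrand q C₁ C₂ (2 ^ k) t ≤
      weakTypeLogConst q ℓ C₁ C₂ * (t * log (2 + t) ^ (ℓ + 1)) := by
  obtain ⟨k₀, hk₀, hscale⟩ := exists_dyadic_scale ht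
  set a : ℕ → ℝ := fun k => dyadicWeight ℓ k * weakTypeIntegrand q C₁ C₂ (2 ^ k) t
  have hbelow := sum_range_dyadicWeight_mul_weakTypeIntegrand_below_le (q := q) (C₁ := C₁) hC₂
    hℓ ht fun k hk => not_le.1 fun h => (hk₀ k).1 h |>.not_gt hk
  have habove := sum_range_dyadicWeight_mul_weakTypeIntegrand_above_le (C₂ := C₂) hq hC₁ hℓ ht
    ((hk₀ k₀).2 le_rfl) n
  have hlog : ((k₀ : ℝ) + 2) ^ (ℓ + 1) ≤ 5 ^ (ℓ + 1) * log (2 + t) ^ (ℓ + 1) := by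
    rw [← mul_rpow (by norm_num) (log_nonneg (by linarith))]
    gcongr
    exact nat_add_two_le_five_mul_log ht hscale
  set S := ∑' j : ℕ, ((j : ℝ) + 2) ^ ℓ * ((2 : ℝ) ^ (1 - q)) ^ j
  calc ∑ k ∈ range n, a k ≤ ∑ k ∈ range (k₀ + n), a k :=
        sum_le_sum_of_subset_of_nonneg (range_mono (by omega)) fun k _ _ =>
          mul_nonneg (dyadicWeight_nonneg ℓ k)
            (weakTypeIntegrand_nonneg hC₁ hC₂ (by positivity) ht)
    _ = ∑ k ∈ range k₀, a k + ∑ j ∈ range n, a (k₀ + j) := sum_range_add a k₀ n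
    _ ≤ (2 * C₂ + C₁ * S) * ((k₀ : ℝ) + 2) ^ (ℓ + 1) * t := by linarith
    _ ≤ (2 * C₂ + C₁ * S) * (5 ^ (ℓ + 1) * log (2 + t) ^ (ℓ + 1)) * t := by gcongr
    _ = _ := by rw [weakTypeLogConst]; ring

end Dyadic

section Integrals

variable {α : Type*} [MeasurableSpace α] {μ : Measure α} {q ℓ C₁ C₂ : ℝ}

lemma tsum_ofReal_dyadicWeight_mul_weakTypeIntegrand_le (hq : 1 < q) (hC₁ : 0 ≤ C₁)
    (hC₂ : 0 ≤ C₂) (hℓ : 0 ≤ ℓ) {t : ℝ} (ht : 0 ≤ t) :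
    ∑' k : ℕ, ENNReal.ofReal (dyadicWeight ℓ k * weakTypeIntegrand q C₁ C₂ (2 ^ k) t) ≤
      ENNReal.ofReal (weakTypeLogConst q ℓ C₁ C₂ * (t * log (2 + t) ^ (ℓ + 1))) :=
  ENNReal.tsum_le_of_sum_range_le fun n => by
    rw [← ENNReal.ofReal_sum_of_nonneg fun k _ => mul_nonneg (dyadicWeight_nonneg ℓ k)
      (weakTypeIntegrand_nonneg hC₁ hC₂ (by positivity) ht)]
    exact ENNReal.ofReal_le_ofReal
      (sum_range_dyadicWeight_mul_weakTypeIntegrand_le hq hC₁ hC₂ hℓ ht n)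

lemma ofReal_mul_log_rpow_le_tsum (hℓ : 0 ≤ ℓ) {t : ℝ} (ht : 0 ≤ t) :
    ENNReal.ofReal (t * log (2 + t) ^ ℓ) ≤ ENNReal.ofReal (dyadicWeight ℓ 0) +
      ∑' k : ℕ, if (2 : ℝ) ^ k < t then ENNReal.ofReal (dyadicWeight ℓ k) else 0 := by
  have hbound : ∀ k : ℕ, t ≤ 2 ^ (k + 1) → t * log (2 + t) ^ ℓ ≤ dyadicWeight ℓ k := by
    intro k hk
    exact mul_le_mul hk (rpow_le_rpow (log_nonneg (by linarith)) (log_two_add_le ht hk) hℓ)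
      (rpow_nonneg (log_nonneg (by linarith)) ℓ) (by positivity)
  by_cases h1 : t ≤ 1
  · exact le_add_right (ENNReal.ofReal_le_ofReal (hbound 0 (by norm_num; linarith)))
  obtain ⟨k₀, hk₀, -⟩ := exists_dyadic_scale ht
  obtain ⟨m, rfl⟩ : ∃ m, k₀ = m + 1 :=
    Nat.exists_eq_add_one_of_ne_zero fun h => h1 (by simpa [h] using (hk₀ 0).2)
  have hlt : (2 : ℝ) ^ m < t := not_le.1 fun h => by simpa using (hk₀ m).1 h
  calc ENNReal.ofReal (t * log (2 + t) ^ ℓ)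
      ≤ if (2 : ℝ) ^ m < t then ENNReal.ofReal (dyadicWeight ℓ m) else 0 := by
        rw [if_pos hlt]
        exact ENNReal.ofReal_le_ofReal (hbound m ((hk₀ _).2 le_rfl))
    _ ≤ _ := ENNReal.le_tsum m
    _ ≤ _ := le_add_self

lemma setLIntegral_ofReal_mul_log_rpow_le (F : α → ℝ) (B : Set α) (hℓ : 0 ≤ ℓ) :
    ∫⁻ x in B, ENNReal.ofReal (|F x| * log (2 + |F x|) ^ ℓ) ∂μ ≤
      ENNReal.ofReal (dyadicWeight ℓ 0) * μ B +
        ∑' k : ℕ, ENNReal.ofReal (dyadicWeight ℓ k) * μ {x | (2 : ℝ) ^ k < |F x|} := by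
  set S : ℕ → Set α := fun k => toMeasurable μ {x | (2 : ℝ) ^ k < |F x|}
  calc ∫⁻ x in B, ENNReal.ofReal (|F x| * log (2 + |F x|) ^ ℓ) ∂μ
      ≤ ∫⁻ x in B, ENNReal.ofReal (dyadicWeight ℓ 0) +
          ∑' k, (S k).indicator (fun _ => ENNReal.ofReal (dyadicWeight ℓ k)) x ∂μ := by
        refine lintegral_mono fun x => (ofReal_mul_log_rpow_le_tsum hℓ (abs_nonneg _)).trans ?_
        gcongr with k
        exact Set.indicator_le_indicator_of_subset (s := {x | (2 : ℝ) ^ k < |F x|})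
          (f := fun _ => ENNReal.ofReal (dyadicWeight ℓ k)) (subset_toMeasurable _ _)
          (fun _ => zero_le) x
    _ = ENNReal.ofReal (dyadicWeight ℓ 0) * μ B +
          ∑' k, ENNReal.ofReal (dyadicWeight ℓ k) * μ.restrict B (S k) := by
        rw [lintegral_add_left measurable_const, setLIntegral_const, lintegral_tsum fun k =>
          (measurable_const.indicator (measurableSet_toMeasurable _ _)).aemeasurable]
        simp_rw [lintegral_indicator_const (measurableSet_toMeasurable _ _)]
        rfl
    _ ≤ _ := by
        refine add_le_add_right
          (ENNReal.tsum_le_tsum fun k => mul_le_mul_of_nonneg_left ?_ zero_le) _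
        exact (Measure.restrict_apply_le _ _).trans (measure_toMeasurable _).le

lemma measurable_weakTypeIntegrand (q C₁ C₂ lam : ℝ) :
    Measurable (weakTypeIntegrand q C₁ C₂ lam) :=
  Measurable.ite measurableSet_Iic (by fun_prop) (by fun_prop)

lemma lintegral_ofReal_weakTypeIntegrand {f : α → ℝ} (hf : AEMeasurable f μ) (lam : ℝ) :
    ∫⁻ x, ENNReal.ofReal (weakTypeIntegrand q C₁ C₂ lam |f x|) ∂μ =
      ENNReal.ofReal (C₁ * lam ^ (-q)) *
          (∫⁻ x in {x | |f x| ≤ lam}, ENNReal.ofReal (|f x| ^ q) ∂μ) +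
        ENNReal.ofReal (C₂ * lam⁻¹) * (∫⁻ x in {x | lam < |f x|}, ENNReal.ofReal |f x| ∂μ) := by
  have hg : AEMeasurable (fun x => |f x|) μ := hf.abs
  rw [← lintegral_const_mul' _ _ ENNReal.ofReal_ne_top,
    ← lintegral_const_mul' _ _ ENNReal.ofReal_ne_top,
    ← lintegral_indicator₀ (nullMeasurableSet_le hg aemeasurable_const),
    ← lintegral_indicator₀ (nullMeasurableSet_lt aemeasurable_const hg),
    ← lintegral_add_left' (((hg.pow_const q).ennreal_ofReal.const_mul _).indicator₀
      (nullMeasurableSet_le hg aemeasurable_const))]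
  congr 1 with x
  by_cases h : |f x| ≤ lam
  · simp [weakTypeIntegrand, h, not_lt.2 h, ENNReal.ofReal_mul' (rpow_nonneg (abs_nonneg _) _)]
  · simp [weakTypeIntegrand, h, not_le.1 h, ENNReal.ofReal_mul' (abs_nonneg _)]

lemma tsum_dyadicWeight_mul_measure_le {F f : α → ℝ} (hf : AEMeasurable f μ) (hq : 1 < q)
    (hC₁ : 0 ≤ C₁) (hC₂ : 0 ≤ C₂) (hℓ : 0 ≤ ℓ)
    (hF : ∀ lam : ℝ, 0 < lam → μ {x | lam < |F x|} ≤
      ENNReal.ofReal (C₁ * lam ^ (-q)) *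
          (∫⁻ x in {x | |f x| ≤ lam}, ENNReal.ofReal (|f x| ^ q) ∂μ) +
        ENNReal.ofReal (C₂ * lam⁻¹) * (∫⁻ x in {x | lam < |f x|}, ENNReal.ofReal |f x| ∂μ)) :
    ∑' k : ℕ, ENNReal.ofReal (dyadicWeight ℓ k) * μ {x | (2 : ℝ) ^ k < |F x|} ≤
      ∫⁻ x, ENNReal.ofReal
        (weakTypeLogConst q ℓ C₁ C₂ * (|f x| * log (2 + |f x|) ^ (ℓ + 1))) ∂μ := by
  have hmeas (k : ℕ) : AEMeasurable (fun x =>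
      ENNReal.ofReal (dyadicWeight ℓ k * weakTypeIntegrand q C₁ C₂ (2 ^ k) |f x|)) μ :=
    ((measurable_const.mul (measurable_weakTypeIntegrand q C₁ C₂ _)).comp_aemeasurable
      hf.abs).ennreal_ofReal
  calc ∑' k : ℕ, ENNReal.ofReal (dyadicWeight ℓ k) * μ {x | (2 : ℝ) ^ k < |F x|}
      ≤ ∑' k : ℕ, ∫⁻ x,
          ENNReal.ofReal (dyadicWeight ℓ k * weakTypeIntegrand q C₁ C₂ (2 ^ k) |f x|) ∂μ := by
        refine ENNReal.tsum_le_tsum fun k => ?_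
        simp_rw [ENNReal.ofReal_mul (dyadicWeight_nonneg ℓ k)]
        rw [lintegral_const_mul' _ _ ENNReal.ofReal_ne_top, lintegral_ofReal_weakTypeIntegrand hf]
        gcongr
        exact hF _ (by positivity)
    _ = ∫⁻ x, ∑' k : ℕ,
          ENNReal.ofReal (dyadicWeight ℓ k * weakTypeIntegrand q C₁ C₂ (2 ^ k) |f x|) ∂μ :=
        (lintegral_tsum hmeas).symm
    _ ≤ _ := lintegral_mono fun x =>
        tsum_ofReal_dyadicWeight_mul_weakTypeIntegrand_le hq hC₁ hC₂ hℓ (abs_nonneg _)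

end Integrals

theorem stmt12 (T : (ℝ → ℝ) → ℝ → ℝ) (q : ℝ) (hq : 1 < q)
    (C₁ C₂ : ℝ) (hC₁ : 0 < C₁) (hC₂ : 0 < C₂)
    (hT : ∀ f : ℝ → ℝ, Integrable f → ∀ lam : ℝ, 0 < lam →
      volume {x : ℝ | lam < |T f x|} ≤
        ENNReal.ofReal (C₁ * lam ^ (-q)) *
            (∫⁻ x in {x : ℝ | |f x| ≤ lam}, ENNReal.ofReal (|f x| ^ q)) +
          ENNReal.ofReal (C₂ * lam⁻¹) *
            (∫⁻ x in {x : ℝ | lam < |f x|}, ENNReal.ofReal |f x|))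
    (ℓ : ℝ) (hℓ : 0 ≤ ℓ) (B : Set ℝ) (hB : IsCompact B) :
    ∃ C : ℝ, 0 < C ∧ ∀ f : ℝ → ℝ, Integrable f →
      (∫⁻ x, ENNReal.ofReal (|f x| * (Real.log (2 + |f x|)) ^ (ℓ + 1)) < ⊤) →
      ∫⁻ x in B, ENNReal.ofReal (|T f x| * (Real.log (2 + |T f x|)) ^ ℓ) ≤
        ENNReal.ofReal
          (C * (1 + ∫ x : ℝ, |f x| * (Real.log (2 + |f x|)) ^ (ℓ + 1))) := by
  set K := weakTypeLogConst q ℓ C₁ C₂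
  have hK : 0 ≤ K := weakTypeLogConst_nonneg hC₁.le hC₂.le
  have hc₀ := dyadicWeight_nonneg ℓ 0
  refine ⟨dyadicWeight ℓ 0 * (volume B).toReal + K + 1, by positivity, fun f hf hfin => ?_⟩
  have hΦ (x : ℝ) : 0 ≤ |f x| * log (2 + |f x|) ^ (ℓ + 1) :=
    mul_nonneg (abs_nonneg _) (rpow_nonneg (log_nonneg (by linarith [abs_nonneg (f x)])) _)
  have hΦint : Integrable fun x => |f x| * log (2 + |f x|) ^ (ℓ + 1) :=
    ⟨(by fun_prop : Measurable fun s : ℝ => |s| * log (2 + |s|) ^ (ℓ + 1)).comp_aemeasurable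
      hf.aemeasurable |>.aestronglyMeasurable,
      (hasFiniteIntegral_iff_ofReal (ae_of_all _ hΦ)).2 hfin⟩
  set I := ∫ x, |f x| * log (2 + |f x|) ^ (ℓ + 1)
  have hI : 0 ≤ I := integral_nonneg hΦ
  calc ∫⁻ x in B, ENNReal.ofReal (|T f x| * log (2 + |T f x|) ^ ℓ)
      ≤ ENNReal.ofReal (dyadicWeight ℓ 0) * volume B +
          ∑' k : ℕ, ENNReal.ofReal (dyadicWeight ℓ k) * volume {x | (2 : ℝ) ^ k < |T f x|} :=
        setLIntegral_ofReal_mul_log_rpow_le _ _ hℓ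
    _ ≤ ENNReal.ofReal (dyadicWeight ℓ 0) * volume B +
          ∫⁻ x, ENNReal.ofReal (K * (|f x| * log (2 + |f x|) ^ (ℓ + 1))) := by
        gcongr
        exact tsum_dyadicWeight_mul_measure_le hf.aemeasurable hq hC₁.le hC₂.le hℓ (hT f hf)
    _ = ENNReal.ofReal (dyadicWeight ℓ 0 * (volume B).toReal + K * I) := by
        simp_rw [ENNReal.ofReal_mul hK]
        rw [lintegral_const_mul' _ _ ENNReal.ofReal_ne_top,
          ← ofReal_integral_eq_lintegral_ofReal hΦint (ae_of_all _ hΦ),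
          ENNReal.ofReal_add (by positivity) (by positivity), ENNReal.ofReal_mul hc₀,
          ENNReal.ofReal_mul hK, ENNReal.ofReal_toReal hB.measure_lt_top.ne]
    _ ≤ _ := by
        have hcB : 0 ≤ dyadicWeight ℓ 0 * (volume B).toReal :=
          mul_nonneg hc₀ ENNReal.toReal_nonneg
        exact ENNReal.ofReal_le_ofReal (by nlinarith [mul_nonneg hcB hI])
end

section
/- Suppose T : L¹(ℝ) → measurable functions satisfies |{x : |Tf(x)| > λ}| ≤ C₁ λ^{-q} ∫_{|f| ≤ λ} |f|^q dx + C₂ λ^{-1} ∫_{|f| > λ} |f| dx with 1 < q < ∞. If |f|(log(2+|f|))^{ℓ+1} is integrable (ℓ ≥ 0), then λ (log(2+λ))^ℓ |{x ∈ B : |Tf(x)| > λ}| → 0 as λ → ∞ for every compact B ⊂ ℝ. -/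
open Real MeasureTheory Filter Asymptotics Topology
open scoped ENNReal

/-!
After multiplication by `λ (log (2 + λ)) ^ ℓ`, the tail term of the weak-type bound is at most
`(log (2 + λ))⁻¹ ∫ |f| (log (2 + |f|)) ^ (ℓ + 1)`, since `log (2 + λ) ≤ log (2 + |f|)` where
`|f| > λ`. In the truncated term, `λ ^ (1 - q) |f| ^ q` is at most `λ ^ ((1 - q) / 2) |f|` where
`|f| ≤ √λ`, and at most `|f|` where `√λ < |f| ≤ λ`; on the latter range
`log (2 + λ) ≤ 2 log (2 + |f|)`, so that part is again `O((log (2 + λ))⁻¹)`, while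
`λ ^ ((1 - q) / 2) (log (2 + λ)) ^ ℓ → 0`.
-/

lemma rpow_le_rpow_sub_one_mul {q t s : ℝ} (hq : 1 ≤ q) (ht : 0 ≤ t) (hts : t ≤ s) :
    t ^ q ≤ s ^ (q - 1) * t := by
  calc t ^ q = t ^ (q - 1) * t := by
        rw [← rpow_add_one' ht (by linarith), sub_add_cancel]
    _ ≤ s ^ (q - 1) * t := by gcongr

lemma rpow_le_inv_mul_rpow_add_one {a b ℓ : ℝ} (ha : 0 < a) (hab : a ≤ b) (hℓ : -1 ≤ ℓ) :
    a ^ ℓ ≤ a⁻¹ * b ^ (ℓ + 1) := by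
  calc a ^ ℓ = a⁻¹ * a ^ (ℓ + 1) := by
        rw [rpow_add_one ha.ne', mul_comm, mul_inv_cancel_right₀ ha.ne']
    _ ≤ a⁻¹ * b ^ (ℓ + 1) := by gcongr; linarith

lemma log_two_add_le_two_mul_log_two_add {s t : ℝ} (hs : 0 ≤ s) (ht : 0 ≤ t) (hst : s ≤ t ^ 2) :
    log (2 + s) ≤ 2 * log (2 + t) := by
  calc log (2 + s) ≤ log ((2 + t) ^ 2) := log_le_log (by linarith) (by nlinarith)
    _ = 2 * log (2 + t) := by rw [log_pow]; norm_num

lemma rpow_one_sub_mul_rpow_le_of_le_sqrt {q s t : ℝ} (hq : 1 ≤ q) (hs : 0 < s) (ht : 0 ≤ t)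
    (hts : t ≤ √s) : s ^ (1 - q) * t ^ q ≤ s ^ ((1 - q) / 2) * t := by
  have hsqrt : √s ^ (q - 1) = s ^ ((q - 1) / 2) := by
    rw [sqrt_eq_rpow, ← rpow_mul hs.le]; ring_nf
  calc s ^ (1 - q) * t ^ q ≤ s ^ (1 - q) * (s ^ ((q - 1) / 2) * t) := by
        rw [← hsqrt]; gcongr; exact rpow_le_rpow_sub_one_mul hq ht hts
    _ = s ^ ((1 - q) / 2) * t := by
        rw [← mul_assoc, ← rpow_add hs]; ring_nf

lemma rpow_one_sub_mul_rpow_le_self {q s t : ℝ} (hq : 1 ≤ q) (hs : 0 < s) (ht : 0 ≤ t)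
    (hts : t ≤ s) : s ^ (1 - q) * t ^ q ≤ t := by
  calc s ^ (1 - q) * t ^ q ≤ s ^ (1 - q) * (s ^ (q - 1) * t) := by
        gcongr; exact rpow_le_rpow_sub_one_mul hq ht hts
    _ = t := by rw [← mul_assoc, ← rpow_add hs]; simp

lemma truncated_integrand_le {q ℓ s t : ℝ} (hq : 1 ≤ q) (hℓ : -1 ≤ ℓ) (hs : 0 < s) (ht : 0 ≤ t)
    (hts : t ≤ s) :
    s ^ (1 - q) * log (2 + s) ^ ℓ * t ^ q ≤
      s ^ ((1 - q) / 2) * log (2 + s) ^ ℓ * t +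
        2 ^ (ℓ + 1) * (log (2 + s))⁻¹ * (t * log (2 + t) ^ (ℓ + 1)) := by
  have hL : 0 < log (2 + s) := log_pos (by linarith)
  have hrem : 0 ≤ 2 ^ (ℓ + 1) * (log (2 + s))⁻¹ * (t * log (2 + t) ^ (ℓ + 1)) :=
    mul_nonneg (mul_nonneg (by positivity) (inv_nonneg.2 hL.le))
      (mul_nonneg ht (rpow_nonneg (log_nonneg (by linarith)) _))
  rcases le_or_gt t √s with hsmall | hlarge
  · have hpow := rpow_one_sub_mul_rpow_le_of_le_sqrt hq hs ht hsmall
    calc s ^ (1 - q) * log (2 + s) ^ ℓ * t ^ q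
        = log (2 + s) ^ ℓ * (s ^ (1 - q) * t ^ q) := by ring
      _ ≤ log (2 + s) ^ ℓ * (s ^ ((1 - q) / 2) * t) := by gcongr
      _ ≤ _ := by
        rw [mul_left_comm, ← mul_assoc]
        exact le_add_of_nonneg_right hrem
  · have hLt : 0 ≤ log (2 + t) := log_nonneg (by linarith)
    have hst : s ≤ t ^ 2 := ((sqrt_lt' ((sqrt_nonneg s).trans_lt hlarge)).1 hlarge).le
    have hlog : log (2 + s) ≤ 2 * log (2 + t) := log_two_add_le_two_mul_log_two_add hs.le ht hst
    calc s ^ (1 - q) * log (2 + s) ^ ℓ * t ^ q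
        = log (2 + s) ^ ℓ * (s ^ (1 - q) * t ^ q) := by ring
      _ ≤ (log (2 + s))⁻¹ * (2 * log (2 + t)) ^ (ℓ + 1) * t :=
        mul_le_mul (rpow_le_inv_mul_rpow_add_one hL hlog hℓ)
          (rpow_one_sub_mul_rpow_le_self hq hs ht hts) (by positivity)
          (mul_nonneg (inv_nonneg.2 hL.le) (rpow_nonneg (mul_nonneg zero_le_two hLt) _))
      _ = 2 ^ (ℓ + 1) * (log (2 + s))⁻¹ * (t * log (2 + t) ^ (ℓ + 1)) := by
        rw [mul_rpow zero_le_two hLt]; ring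
      _ ≤ _ := le_add_of_nonneg_left (by positivity)

lemma tail_integrand_le {ℓ s t : ℝ} (hℓ : -1 ≤ ℓ) (hs : 0 ≤ s) (hst : s ≤ t) :
    log (2 + s) ^ ℓ * t ≤ (log (2 + s))⁻¹ * (t * log (2 + t) ^ (ℓ + 1)) := by
  have hL : 0 < log (2 + s) := log_pos (by linarith)
  calc log (2 + s) ^ ℓ * t ≤ (log (2 + s))⁻¹ * log (2 + t) ^ (ℓ + 1) * t := by
        refine mul_le_mul_of_nonneg_right ?_ (by linarith)
        exact rpow_le_inv_mul_rpow_add_one hL (log_le_log (by linarith) (by linarith)) hℓ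
    _ = _ := by ring

lemma tendsto_rpow_neg_mul_log_two_add_rpow {ε : ℝ} (hε : 0 < ε) (ℓ : ℝ) :
    Tendsto (fun x : ℝ => x ^ (-ε) * log (2 + x) ^ ℓ) atTop (𝓝 0) := by
  have hshift : Tendsto (fun x : ℝ => 2 + x) atTop atTop :=
    tendsto_atTop_add_const_left _ 2 tendsto_id
  have hlin : (fun x : ℝ => 2 + x) =O[atTop] fun x => x :=
    IsBigO.of_bound 3 <| by
      filter_upwards [eventually_ge_atTop 1] with x hx
      rw [norm_of_nonneg (by linarith), norm_of_nonneg (by linarith)]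
      linarith
  have ho : (fun x : ℝ => log (2 + x) ^ ℓ) =o[atTop] fun x => x ^ ε :=
    ((isLittleO_log_rpow_rpow_atTop ℓ hε).comp_tendsto hshift).trans_isBigO
      (hlin.rpow hε.le (eventually_ge_atTop 0))
  refine ho.tendsto_div_nhds_zero.congr' ?_
  filter_upwards [eventually_ge_atTop 0] with x hx
  rw [rpow_neg hx, div_eq_inv_mul]

lemma tendsto_inv_log_two_add_atTop : Tendsto (fun x : ℝ => (log (2 + x))⁻¹) atTop (𝓝 0) :=
  (tendsto_log_atTop.comp (tendsto_atTop_add_const_left _ 2 tendsto_id)).inv_tendsto_atTop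

lemma ENNReal.tendsto_ofReal_mul_const_nhds_zero {ι : Type*} {l : Filter ι} {u : ι → ℝ}
    (hu : Tendsto u l (𝓝 0)) {c : ℝ≥0∞} (hc : c ≠ ∞) :
    Tendsto (fun i => ENNReal.ofReal (u i) * c) l (𝓝 0) := by
  simpa using ENNReal.Tendsto.mul_const (ENNReal.tendsto_ofReal hu) (Or.inr hc)

section LIntegral

variable {α : Type*} [MeasurableSpace α] {μ : Measure α}

lemma ofReal_mul_setLIntegral_le {s : Set α} (hs : NullMeasurableSet s μ) {c : ℝ} (hc : 0 ≤ c)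
    {g h : α → ℝ} (hgh : ∀ x ∈ s, c * g x ≤ h x) :
    ENNReal.ofReal c * ∫⁻ x in s, ENNReal.ofReal (g x) ∂μ ≤ ∫⁻ x, ENNReal.ofReal (h x) ∂μ := by
  rw [← lintegral_const_mul' _ _ ENNReal.ofReal_ne_top]
  calc ∫⁻ x in s, ENNReal.ofReal c * ENNReal.ofReal (g x) ∂μ
      ≤ ∫⁻ x in s, ENNReal.ofReal (h x) ∂μ := by
        refine lintegral_mono_ae ?_
        filter_upwards [ae_restrict_mem₀ hs] with x hx
        rw [← ENNReal.ofReal_mul hc]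
        exact ENNReal.ofReal_le_ofReal (hgh x hx)
    _ ≤ ∫⁻ x, ENNReal.ofReal (h x) ∂μ := setLIntegral_le_lintegral _ _

lemma lintegral_ofReal_const_mul {b : ℝ} (hb : 0 ≤ b) (v : α → ℝ) :
    ∫⁻ x, ENNReal.ofReal (b * v x) ∂μ = ENNReal.ofReal b * ∫⁻ x, ENNReal.ofReal (v x) ∂μ := by
  simp_rw [ENNReal.ofReal_mul hb]
  exact lintegral_const_mul' _ _ ENNReal.ofReal_ne_top

lemma lintegral_ofReal_mul_add_mul_le {u v : α → ℝ} (hu : AEMeasurable u μ) {a b : ℝ}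
    (ha : 0 ≤ a) (hb : 0 ≤ b) :
    ∫⁻ x, ENNReal.ofReal (a * u x + b * v x) ∂μ ≤
      ENNReal.ofReal a * ∫⁻ x, ENNReal.ofReal (u x) ∂μ +
        ENNReal.ofReal b * ∫⁻ x, ENNReal.ofReal (v x) ∂μ := by
  calc ∫⁻ x, ENNReal.ofReal (a * u x + b * v x) ∂μ
      ≤ ∫⁻ x, ENNReal.ofReal (a * u x) + ENNReal.ofReal (b * v x) ∂μ :=
        lintegral_mono fun x => ENNReal.ofReal_add_le
    _ = _ := by
        rw [lintegral_add_left' (by fun_prop), lintegral_ofReal_const_mul ha,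
          lintegral_ofReal_const_mul hb]

variable {f : α → ℝ} {q ℓ : ℝ}

lemma tendsto_ofReal_log_rpow_mul_setLIntegral_lt_abs (hf : AEMeasurable f μ) (hℓ : -1 ≤ ℓ)
    (hM : ∫⁻ x, ENNReal.ofReal (|f x| * log (2 + |f x|) ^ (ℓ + 1)) ∂μ ≠ ∞) :
    Tendsto (fun s : ℝ => ENNReal.ofReal (log (2 + s) ^ ℓ) *
      ∫⁻ x in {x | s < |f x|}, ENNReal.ofReal |f x| ∂μ) atTop (𝓝 0) := by
  refine tendsto_nhds_bot_mono
    (ENNReal.tendsto_ofReal_mul_const_nhds_zero tendsto_inv_log_two_add_atTop hM) ?_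
  filter_upwards [eventually_ge_atTop 0] with s hs
  rw [← lintegral_ofReal_const_mul (inv_nonneg.2 (log_nonneg (by linarith)))]
  exact ofReal_mul_setLIntegral_le (hf.abs.nullMeasurable measurableSet_Ioi)
    (rpow_nonneg (log_nonneg (by linarith)) _) fun x hx => tail_integrand_le hℓ hs (le_of_lt hx)

lemma tendsto_ofReal_rpow_mul_setLIntegral_abs_le (hf : AEMeasurable f μ) (hq : 1 < q)
    (hℓ : -1 ≤ ℓ) (hI : ∫⁻ x, ENNReal.ofReal |f x| ∂μ ≠ ∞)
    (hM : ∫⁻ x, ENNReal.ofReal (|f x| * log (2 + |f x|) ^ (ℓ + 1)) ∂μ ≠ ∞) :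
    Tendsto (fun s : ℝ => ENNReal.ofReal (s ^ (1 - q) * log (2 + s) ^ ℓ) *
      ∫⁻ x in {x | |f x| ≤ s}, ENNReal.ofReal (|f x| ^ q) ∂μ) atTop (𝓝 0) := by
  have ha : Tendsto (fun s : ℝ => s ^ ((1 - q) / 2) * log (2 + s) ^ ℓ) atTop (𝓝 0) := by
    convert tendsto_rpow_neg_mul_log_two_add_rpow (ε := (q - 1) / 2) (by linarith) ℓ using 4
    ring
  have hb := tendsto_inv_log_two_add_atTop.const_mul (2 ^ (ℓ + 1))
  rw [mul_zero] at hb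
  have hbound := (ENNReal.tendsto_ofReal_mul_const_nhds_zero ha hI).add
    (ENNReal.tendsto_ofReal_mul_const_nhds_zero hb hM)
  rw [add_zero] at hbound
  refine tendsto_nhds_bot_mono hbound ?_
  filter_upwards [eventually_gt_atTop 0] with s hs
  have hL : 0 < log (2 + s) := log_pos (by linarith)
  calc _ ≤ ∫⁻ x, ENNReal.ofReal (s ^ ((1 - q) / 2) * log (2 + s) ^ ℓ * |f x| +
        2 ^ (ℓ + 1) * (log (2 + s))⁻¹ * (|f x| * log (2 + |f x|) ^ (ℓ + 1))) ∂μ :=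
      ofReal_mul_setLIntegral_le (hf.abs.nullMeasurable measurableSet_Iic) (by positivity)
        fun x hx => truncated_integrand_le hq.le hℓ hs (abs_nonneg _) hx
    _ ≤ _ := lintegral_ofReal_mul_add_mul_le hf.abs (by positivity)
        (mul_nonneg (by positivity) (inv_nonneg.2 hL.le))

end LIntegral

lemma ofReal_mul_weakType_bound_eq {q C₁ C₂ s L : ℝ} (hC₁ : 0 ≤ C₁) (hC₂ : 0 ≤ C₂) (hs : 0 < s)
    (hL : 0 ≤ L) (A B : ℝ≥0∞) :
    ENNReal.ofReal (s * L) *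
        (ENNReal.ofReal (C₁ * s ^ (-q)) * A + ENNReal.ofReal (C₂ * s⁻¹) * B) =
      ENNReal.ofReal C₁ * (ENNReal.ofReal (s ^ (1 - q) * L) * A) +
        ENNReal.ofReal C₂ * (ENNReal.ofReal L * B) := by
  have hsL : 0 ≤ s * L := mul_nonneg hs.le hL
  rw [mul_add, ← mul_assoc, ← mul_assoc, ← mul_assoc, ← mul_assoc, ← ENNReal.ofReal_mul hsL,
    ← ENNReal.ofReal_mul hsL, ← ENNReal.ofReal_mul hC₁, ← ENNReal.ofReal_mul hC₂]
  congr 3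
  · rw [sub_eq_add_neg, rpow_add hs, rpow_one]; ring
  · field_simp

theorem stmt13_general (T : (ℝ → ℝ) → ℝ → ℝ) (q : ℝ) (hq : 1 < q)
    (C₁ C₂ : ℝ) (hC₁ : 0 < C₁) (hC₂ : 0 < C₂)
    (hT : ∀ f : ℝ → ℝ, Integrable f → ∀ lam : ℝ, 0 < lam →
      volume {x : ℝ | lam < |T f x|} ≤
        ENNReal.ofReal (C₁ * lam ^ (-q)) *
            (∫⁻ x in {x : ℝ | |f x| ≤ lam}, ENNReal.ofReal (|f x| ^ q)) +
          ENNReal.ofReal (C₂ * lam⁻¹) *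
            (∫⁻ x in {x : ℝ | lam < |f x|}, ENNReal.ofReal |f x|))
    (ℓ : ℝ) (hℓ : 0 ≤ ℓ)
    (f : ℝ → ℝ) (hf : Integrable f)
    (hfin : ∫⁻ x, ENNReal.ofReal (|f x| * (Real.log (2 + |f x|)) ^ (ℓ + 1)) < ⊤)
    (B : Set ℝ) :
    Tendsto
      (fun lam : ℝ =>
        lam * (Real.log (2 + lam)) ^ ℓ *
          (volume {x : ℝ | x ∈ B ∧ lam < |T f x|}).toReal)
      atTop (nhds 0) := by
  have hlog : ∀ lam : ℝ, 0 ≤ lam → 0 ≤ log (2 + lam) ^ ℓ := fun lam hlam =>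
    rpow_nonneg (log_nonneg (by linarith)) _
  have hsum := (ENNReal.Tendsto.const_mul (tendsto_ofReal_rpow_mul_setLIntegral_abs_le
      hf.aemeasurable hq (by linarith) hf.abs.lintegral_lt_top.ne hfin.ne)
      (Or.inr (ENNReal.ofReal_ne_top (r := C₁)))).add
    (ENNReal.Tendsto.const_mul (tendsto_ofReal_log_rpow_mul_setLIntegral_lt_abs
      hf.aemeasurable (by linarith) hfin.ne) (Or.inr (ENNReal.ofReal_ne_top (r := C₂))))
  rw [mul_zero, mul_zero, add_zero] at hsum
  have hweak : Tendsto (fun lam : ℝ => ENNReal.ofReal (lam * log (2 + lam) ^ ℓ) *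
      volume {x : ℝ | lam < |T f x|}) atTop (𝓝 0) := by
    refine tendsto_nhds_bot_mono hsum ?_
    filter_upwards [eventually_gt_atTop 0] with lam hlam
    rw [← ofReal_mul_weakType_bound_eq hC₁.le hC₂.le hlam (hlog lam hlam.le)]
    exact mul_le_mul_right (hT f hf lam hlam) _
  have hlocal : Tendsto (fun lam : ℝ => ENNReal.ofReal (lam * log (2 + lam) ^ ℓ) *
      volume {x : ℝ | x ∈ B ∧ lam < |T f x|}) atTop (𝓝 0) :=
    tendsto_nhds_bot_mono' hweak fun lam => mul_le_mul_right (measure_mono fun x hx => hx.2) _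
  refine ((ENNReal.tendsto_toReal ENNReal.zero_ne_top).comp hlocal).congr' ?_
  filter_upwards [eventually_ge_atTop 0] with lam hlam
  simp [ENNReal.toReal_mul, ENNReal.toReal_ofReal (mul_nonneg hlam (hlog lam hlam))]

theorem stmt13 (T : (ℝ → ℝ) → ℝ → ℝ) (q : ℝ) (hq : 1 < q)
    (C₁ C₂ : ℝ) (hC₁ : 0 < C₁) (hC₂ : 0 < C₂)
    (hT : ∀ f : ℝ → ℝ, Integrable f → ∀ lam : ℝ, 0 < lam →
      volume {x : ℝ | lam < |T f x|} ≤
        ENNReal.ofReal (C₁ * lam ^ (-q)) *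
            (∫⁻ x in {x : ℝ | |f x| ≤ lam}, ENNReal.ofReal (|f x| ^ q)) +
          ENNReal.ofReal (C₂ * lam⁻¹) *
            (∫⁻ x in {x : ℝ | lam < |f x|}, ENNReal.ofReal |f x|))
    (ℓ : ℝ) (hℓ : 0 ≤ ℓ)
    (f : ℝ → ℝ) (hf : Integrable f)
    (hfin : ∫⁻ x, ENNReal.ofReal (|f x| * (Real.log (2 + |f x|)) ^ (ℓ + 1)) < ⊤)
    (B : Set ℝ) (hB : IsCompact B) :
    Tendsto
      (fun lam : ℝ =>
        lam * (Real.log (2 + lam)) ^ ℓ *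
          (volume {x : ℝ | x ∈ B ∧ lam < |T f x|}).toReal)
      atTop (nhds 0) :=
  stmt13_general T q hq C₁ C₂ hC₁ hC₂ hT ℓ hℓ f hf hfin B
end

section
/- For ξ ∈ ℝ, ∫_{-∞}^∞ (2 e^{(-2πixξ + 2x)}) / (π (1 + e^{2x})²) dx = -πiξ / sin(-π²iξ), interpreted as 1/π at ξ = 0; consequently |∫_{-∞}^∞ 2e^{2x}(1+e^{2x})^{-2} π^{-1} e^{-2πixξ} dx| = π|ξ| / sinh(π²|ξ|) for ξ ≠ 0. -/
open Real Complex MeasureTheory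

/-!
The substitution `u = e^{2x} / (1 + e^{2x})` maps `ℝ` onto `(0, 1)`, has Jacobian
`2 e^{2x} / (1 + e^{2x})²`, and turns `e^{-2πixξ}` into `u^{-s} (1 - u)^s` with `s = πiξ`.
The integral is therefore `π⁻¹ B(1 - s, 1 + s) = π⁻¹ s Γ(s) Γ(1 - s) = s / sin (π s)` by Euler's
reflection formula, and `|sin (iy)| = |sinh y|` gives the modulus.
-/

noncomputable def logisticTwo (x : ℝ) : ℝ := Real.exp (2 * x) / (1 + Real.exp (2 * x))

lemma one_add_exp_pos (x : ℝ) : 0 < 1 + Real.exp x := by positivity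

lemma logisticTwo_pos (x : ℝ) : 0 < logisticTwo x := by
  unfold logisticTwo; positivity

lemma hasDerivAt_logisticTwo (x : ℝ) :
    HasDerivAt logisticTwo (2 * Real.exp (2 * x) / (1 + Real.exp (2 * x)) ^ 2) x := by
  have hexp : HasDerivAt (fun x : ℝ => Real.exp (2 * x)) (2 * Real.exp (2 * x)) x := by
    simpa [mul_comm] using ((hasDerivAt_id x).const_mul 2).exp
  refine (hexp.div (hexp.const_add 1) (one_add_exp_pos _).ne').congr_deriv ?_
  field_simp
  ring

lemma logisticTwo_injective : Function.Injective logisticTwo := by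
  intro a b hab
  rw [logisticTwo, logisticTwo, div_eq_div_iff (one_add_exp_pos _).ne' (one_add_exp_pos _).ne']
    at hab
  have : Real.exp (2 * a) = Real.exp (2 * b) := by linarith
  linarith [Real.exp_injective this]

lemma range_logisticTwo : Set.range logisticTwo = Set.Ioo 0 1 := by
  ext u
  constructor
  · rintro ⟨x, rfl⟩
    exact ⟨logisticTwo_pos x,
      (div_lt_one (one_add_exp_pos _)).mpr (by linarith [Real.exp_pos (2 * x)])⟩
  · rintro ⟨h0, h1⟩
    refine ⟨Real.log (u / (1 - u)) / 2, ?_⟩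
    rw [logisticTwo, mul_div_cancel₀ _ two_ne_zero, Real.exp_log (div_pos h0 (by linarith))]
    field_simp
    ring

lemma integral_comp_logisticTwo {E : Type*} [NormedAddCommGroup E] [NormedSpace ℝ E]
    (g : ℝ → E) :
    ∫ x, (2 * Real.exp (2 * x) / (1 + Real.exp (2 * x)) ^ 2) • g (logisticTwo x) =
      ∫ u in Set.Ioo 0 1, g u := by
  rw [← range_logisticTwo, ← Set.image_univ, integral_image_eq_integral_abs_deriv_smul
    MeasurableSet.univ (fun x _ => (hasDerivAt_logisticTwo x).hasDerivWithinAt)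
    logisticTwo_injective.injOn, setIntegral_univ]
  congr! 3 with x
  exact (abs_of_pos (by positivity)).symm

lemma one_sub_logisticTwo (x : ℝ) : 1 - logisticTwo x = (1 + Real.exp (2 * x))⁻¹ := by
  have := one_add_exp_pos (2 * x)
  rw [logisticTwo]
  field_simp
  ring

lemma logisticTwo_cpow_mul_one_sub_cpow (s : ℂ) (x : ℝ) :
    (logisticTwo x : ℂ) ^ (-s) * (1 - logisticTwo x : ℂ) ^ s = Complex.exp (-(2 * s * x)) := by
  have hpos := one_add_exp_pos (2 * x)
  have hinv := inv_pos.2 hpos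
  rw [← ofReal_one, ← ofReal_sub, one_sub_logisticTwo,
    cpow_def_of_ne_zero (ofReal_ne_zero.2 (logisticTwo_pos x).ne'),
    cpow_def_of_ne_zero (ofReal_ne_zero.2 hinv.ne'), ← Complex.exp_add,
    ← ofReal_log (logisticTwo_pos x).le, ← ofReal_log hinv.le,
    logisticTwo, Real.log_div (Real.exp_pos _).ne' hpos.ne', Real.log_exp, Real.log_inv]
  push_cast
  ring_nf

lemma fourierIntegral_eq_betaIntegral (ξ : ℝ) :
    ∫ x : ℝ, ((2 * Real.exp (2 * x) / (π * (1 + Real.exp (2 * x)) ^ 2) : ℝ) : ℂ) *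
        Complex.exp (-(2 * π * Complex.I * x * ξ)) =
      (1 / π : ℂ) * betaIntegral (1 - π * Complex.I * ξ) (1 + π * Complex.I * ξ) := by
  rw [betaIntegral, intervalIntegral.integral_of_le zero_le_one, integral_Ioc_eq_integral_Ioo,
    ← integral_comp_logisticTwo, ← integral_const_mul]
  congr 1 with x
  rw [sub_sub_cancel_left, add_sub_cancel_left, logisticTwo_cpow_mul_one_sub_cpow, real_smul]
  push_cast
  field_simp

lemma betaIntegral_one_sub_one_add {s : ℂ} (hs : |s.re| < 1) (hs0 : s ≠ 0) :
    betaIntegral (1 - s) (1 + s) = π * s / Complex.sin (π * s) := by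
  rw [abs_lt] at hs
  have h := Gamma_mul_Gamma_eq_betaIntegral (s := 1 - s) (t := 1 + s)
    (by simp only [sub_re, one_re]; linarith) (by simp only [add_re, one_re]; linarith)
  rw [show 1 - s + (1 + s) = (1 : ℕ) + 1 by push_cast; ring, Complex.Gamma_nat_eq_factorial,
    add_comm 1 s, Complex.Gamma_add_one s hs0, mul_left_comm, mul_comm (Complex.Gamma (1 - s)),
    Complex.Gamma_mul_Gamma_one_sub] at h
  simp only [Nat.factorial_one, Nat.cast_one, one_mul] at h
  rw [add_comm 1 s, ← h]
  ring

lemma norm_sin_mul_I (y : ℝ) : ‖Complex.sin (y * Complex.I)‖ = |Real.sinh y| := by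
  rw [sin_mul_I, ← ofReal_sinh, norm_mul, norm_I, mul_one, norm_real, Real.norm_eq_abs]

theorem stmt17 :
    (∀ ξ : ℝ,
      ∫ x : ℝ,
          ((2 * Real.exp (2 * x) / (π * (1 + Real.exp (2 * x)) ^ 2) : ℝ) : ℂ) *
            Complex.exp (-(2 * π * Complex.I * x * ξ)) =
        if ξ = 0 then (1 / π : ℂ)
        else -(π * Complex.I * ξ) / Complex.sin (-(π ^ 2 * Complex.I * ξ))) ∧
    ∀ ξ : ℝ, ξ ≠ 0 →
      ‖(∫ x : ℝ,
            ((2 * Real.exp (2 * x) / (π * (1 + Real.exp (2 * x)) ^ 2) : ℝ) : ℂ) *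
              Complex.exp (-(2 * π * Complex.I * x * ξ)))‖ =
        π * |ξ| / Real.sinh (π ^ 2 * |ξ|) := by
  have hfourier (ξ : ℝ) (hξ : ξ ≠ 0) : ∫ x : ℝ,
      ((2 * Real.exp (2 * x) / (π * (1 + Real.exp (2 * x)) ^ 2) : ℝ) : ℂ) *
        Complex.exp (-(2 * π * Complex.I * x * ξ)) =
      -(π * Complex.I * ξ) / Complex.sin (-(π ^ 2 * Complex.I * ξ)) := by
    rw [fourierIntegral_eq_betaIntegral, betaIntegral_one_sub_one_add (by simp) (by simp [hξ]),
      Complex.sin_neg, neg_div_neg_eq]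
    field_simp
  refine ⟨fun ξ => ?_, fun ξ hξ => ?_⟩
  · split_ifs with hξ
    · rw [fourierIntegral_eq_betaIntegral, hξ]
      simp [betaIntegral_eval_one_right]
    · exact hfourier ξ hξ
  · have hsin_arg : -(π ^ 2 * Complex.I * ξ : ℂ) = ((-(π ^ 2 * ξ) : ℝ) : ℂ) * Complex.I := by
      push_cast; ring
    rw [hfourier ξ hξ, norm_div, hsin_arg, norm_sin_mul_I, norm_neg]
    simp [abs_mul, Real.abs_sinh, abs_of_pos pi_pos]
end
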